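/- Let Δ ∈ (0,1) and ι_Δ as above. Then the second derivative of ι_Δ at x equals −(Δ²/(1−Δ²)) |x|^{-1} ẑ ⊗ x̂⊥ ⊗ x̂⊥, where z = ι_Δ(x). -/

import Mathlib

open MeasureTheory Metric

noncomputable section

abbrev E2 : Type := EuclideanSpace ℝ (Fin 2)

def e2 (i : Fin 2) : E2 := EuclideanSpace.single i (1 : ℝ)

/-- The angular coordinate `φ(x) ∈ (−π, π]` of `x ∈ ℝ²`. -/
noncomputable def ang (x : E2) : ℝ := Complex.arg (x 0 + x 1 * Complex.I)

/-- The negative real axis `ℝ₋ = {(x₁,0) : x₁ ≤ 0}`. -/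
def negAxis : Set E2 := {x : E2 | x 1 = 0 ∧ x 0 ≤ 0}

/-- The map `ι_Δ(x) = (|x| cos(φ(x)/√(1−Δ²)), |x| sin(φ(x)/√(1−Δ²)))`. -/
noncomputable def iota (Δ : ℝ) (x : E2) : E2 :=
  (WithLp.equiv 2 (Fin 2 → ℝ)).symm
    ![‖x‖ * Real.cos (ang x / Real.sqrt (1 - Δ ^ 2)),
      ‖x‖ * Real.sin (ang x / Real.sqrt (1 - Δ ^ 2))]

/-- Components of `ŵ = w/|w|`. -/
noncomputable def hat (w : E2) (i : Fin 2) : ℝ := w i / ‖w‖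

/-- Components of `ŵ⊥ = (−w₂, w₁)/|w|`. -/
noncomputable def perpHat (w : E2) (i : Fin 2) : ℝ :=
  (if i = 0 then -(w 1) else w 0) / ‖w‖
/-!
In the complex coordinate `z = x₁ + i x₂`, `ι_Δ` is `z ↦ exp (L (log z))`, where
`L (a + b i) = a + c b i` is real-linear and `c = 1/√(1-Δ²)`. Hence `Dι(z) v = ι(z) L(v/z)`, and
differentiating once more gives `ι(z) (L(u/z) L(v/z) - L(uv/z²)) = (1 - c²) Im(u/z) Im(v/z) ι(z)`.
Finally `1 - c² = -Δ²/(1-Δ²)` and `Im(v/z) = ⟨x̂⊥, v⟩ / |x|`.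
-/

open Topology

namespace Complex

def stretchIm (c : ℝ) : ℂ →L[ℝ] ℂ :=
  ofRealCLM.comp reCLM + imCLM.smulRight (c * I)

@[simp]
lemma stretchIm_apply (c : ℝ) (w : ℂ) : stretchIm c w = w.re + c * w.im * I := by
  simp [stretchIm, real_smul]
  ring

lemma stretchIm_mul_sub_stretchIm_mul (c : ℝ) (a b : ℂ) :
    stretchIm c a * stretchIm c b - stretchIm c (a * b) = ((1 - c ^ 2) * (a.im * b.im) : ℝ) := by
  apply Complex.ext <;>
  · simp only [stretchIm_apply, add_re, add_im, mul_re, mul_im, sub_re, sub_im, ofReal_re,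
      ofReal_im, I_re, I_im]
    ring

def scaleArg (c : ℝ) (z : ℂ) : ℂ := exp (stretchIm c (log z))

lemma scaleArg_eq {c : ℝ} {z : ℂ} (hz : z ≠ 0) :
    scaleArg c z = ‖z‖ * exp ((c * arg z : ℝ) * I) := by
  rw [scaleArg, stretchIm_apply, log_re, log_im, exp_add, ← ofReal_exp,
    Real.exp_log (norm_pos_iff.mpr hz)]
  push_cast
  ring_nf

lemma hasFDerivAt_scaleArg {c : ℝ} {z : ℂ} (hz : z ∈ slitPlane) :
    HasFDerivAt (scaleArg c) (scaleArg c z • (stretchIm c).comp (z⁻¹ • .id ℝ ℂ)) z := by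
  have hlog := (hasDerivAt_log hz).hasFDerivAt.restrictScalars ℝ
  have hexp := (hasDerivAt_exp (stretchIm c (log z))).hasFDerivAt.restrictScalars ℝ
  refine (hexp.comp z ((stretchIm c).hasFDerivAt.comp z hlog)).congr_fderiv ?_
  ext v
  simp [scaleArg, mul_comm]

lemma fderiv_fderiv_scaleArg_apply {c : ℝ} {z : ℂ} (hz : z ∈ slitPlane) (u v : ℂ) :
    fderiv ℝ (fun w => fderiv ℝ (scaleArg c) w v) z u
      = ((1 - c ^ 2) * ((u / z).im * (v / z).im) : ℝ) * scaleArg c z := by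
  have hz0 : z ≠ 0 := slitPlane_ne_zero hz
  have hfirst : (fun w => fderiv ℝ (scaleArg c) w v)
      =ᶠ[𝓝 z] fun w => scaleArg c w * stretchIm c (v * w⁻¹) := by
    filter_upwards [isOpen_slitPlane.mem_nhds hz] with w hw
    simp [(hasFDerivAt_scaleArg hw).fderiv, mul_comm]
  have hdiv := ((hasDerivAt_inv hz0).const_mul v).hasFDerivAt.restrictScalars ℝ
  have hprod : HasFDerivAt (fun w => scaleArg c w * stretchIm c (v * w⁻¹)) _ z :=
    (hasFDerivAt_scaleArg hz).mul ((stretchIm c).hasFDerivAt.comp z hdiv)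
  rw [hfirst.fderiv_eq, hprod.fderiv]
  -- the derivative of `w ↦ v / w` in direction `u` is `-(u / z) (v / z)`
  have hchain : u * (v * -(z ^ 2)⁻¹) = -((u / z) * (v / z)) := by
    field_simp
  simp only [_root_.add_apply, _root_.smul_apply,
    ContinuousLinearMap.comp_apply, ContinuousLinearMap.coe_restrictScalars',
    ContinuousLinearMap.toSpanSingleton_apply, smul_eq_mul, ContinuousLinearMap.id_apply]
  rw [hchain, map_neg, ← div_eq_mul_inv, inv_mul_eq_div, ← stretchIm_mul_sub_stretchIm_mul]
  ring

end Complex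

section ConjugateByEquiv

variable {𝕜 E E' F F' : Type*} [NontriviallyNormedField 𝕜]
  [NormedAddCommGroup E] [NormedSpace 𝕜 E] [NormedAddCommGroup E'] [NormedSpace 𝕜 E']
  [NormedAddCommGroup F] [NormedSpace 𝕜 F] [NormedAddCommGroup F'] [NormedSpace 𝕜 F']

theorem ContinuousLinearEquiv.fderiv_conj_apply (e : E ≃L[𝕜] F) (e' : E' ≃L[𝕜] F') (f : E → E')
    (x v : F) :
    fderiv 𝕜 (e' ∘ f ∘ e.symm) x v = e' (fderiv 𝕜 f (e.symm x) (e.symm v)) := by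
  rw [e'.comp_fderiv, e.symm.comp_right_fderiv]
  rfl

theorem ContinuousLinearEquiv.fderiv_fderiv_conj_apply (e : E ≃L[𝕜] F) (e' : E' ≃L[𝕜] F')
    (f : E → E') (x u v : F) :
    fderiv 𝕜 (fun y => fderiv 𝕜 (e' ∘ f ∘ e.symm) y v) x u
      = e' (fderiv 𝕜 (fun z => fderiv 𝕜 f z (e.symm v)) (e.symm x) (e.symm u)) := by
  simp_rw [e.fderiv_conj_apply e' f]
  exact e.fderiv_conj_apply e' (fun z => fderiv 𝕜 f z (e.symm v)) x u

end ConjugateByEquiv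

open Complex

lemma ang_eq_arg (x : E2) : ang x = arg (orthonormalBasisOneI.repr.symm x) := rfl

lemma preimage_repr_symm_slitPlane : orthonormalBasisOneI.repr.symm ⁻¹' slitPlane = negAxisᶜ := by
  ext x
  simp [negAxis, mem_slitPlane_iff, or_iff_not_imp_right]

lemma iota_eq_scaleArg (Δ : ℝ) {y : E2} (hy : y ≠ 0) :
    iota Δ y = orthonormalBasisOneI.repr
      (scaleArg (√(1 - Δ ^ 2))⁻¹ (orthonormalBasisOneI.repr.symm y)) := by
  have hy' : orthonormalBasisOneI.repr.symm y ≠ 0 := by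
    rwa [Ne, LinearIsometryEquiv.map_eq_zero_iff]
  rw [scaleArg_eq hy', LinearIsometryEquiv.norm_map, ← ang_eq_arg]
  ext k
  fin_cases k <;> simp [iota, div_eq_inv_mul, -ofReal_mul, -ofReal_inv, exp_ofReal_mul_I_re,
    exp_ofReal_mul_I_im]

lemma norm_iota (Δ : ℝ) (x : E2) : ‖iota Δ x‖ = ‖x‖ := by
  simp [EuclideanSpace.norm_eq, iota, mul_pow, ← mul_add]

lemma im_repr_symm_e2_div (x : E2) (i : Fin 2) :
    (orthonormalBasisOneI.repr.symm (e2 i) / orthonormalBasisOneI.repr.symm x).im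
      = perpHat x i / ‖x‖ := by
  have hnormSq : normSq (orthonormalBasisOneI.repr.symm x) = ‖x‖ ^ 2 := by
    rw [normSq_eq_norm_sq, LinearIsometryEquiv.norm_map]
  rw [div_im, hnormSq]
  fin_cases i <;> simp [e2, perpHat, div_div, sq, neg_div]

lemma iota_eventuallyEq_conj_scaleArg (Δ : ℝ) {x : E2} (hx : x ≠ 0) :
    iota Δ =ᶠ[𝓝 x] orthonormalBasisOneI.repr.toContinuousLinearEquiv ∘
      scaleArg (√(1 - Δ ^ 2))⁻¹ ∘ orthonormalBasisOneI.repr.toContinuousLinearEquiv.symm := by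
  filter_upwards [isOpen_ne.mem_nhds hx] with y hy
  exact iota_eq_scaleArg Δ hy

/-- The second derivative of `ι_Δ` at `x ∉ ℝ₋` equals
`−(Δ²/(1−Δ²)) |x|⁻¹ ẑ ⊗ x̂⊥ ⊗ x̂⊥` with `z = ι_Δ(x)`. -/
theorem stmt15 (Δ : ℝ) (hΔ : Δ ∈ Set.Ioo (0 : ℝ) 1) (x : E2) (hx : x ∉ negAxis)
    (k i j : Fin 2) :
    (fderiv ℝ (fun z => fderiv ℝ (iota Δ) z (e2 i)) x (e2 j)) k
      = -(Δ ^ 2 / (1 - Δ ^ 2)) * ‖x‖⁻¹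
          * hat (iota Δ x) k * perpHat x i * perpHat x j := by
  have hxs : orthonormalBasisOneI.repr.symm x ∈ slitPlane := by
    rwa [← Set.mem_preimage, preimage_repr_symm_slitPlane]
  have hx0 : x ≠ 0 := fun h => hx (h ▸ by simp [negAxis])
  have hc : 1 - ((√(1 - Δ ^ 2))⁻¹) ^ 2 = -(Δ ^ 2 / (1 - Δ ^ 2)) := by
    have : 0 < 1 - Δ ^ 2 := by nlinarith [hΔ.1, hΔ.2]
    rw [inv_pow, Real.sq_sqrt this.le]
    field_simp
    ring
  have hD := (iota_eventuallyEq_conj_scaleArg Δ hx0).fderiv (𝕜 := ℝ)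
  rw [Filter.EventuallyEq.fderiv_eq (hD.mono fun y hy => congrArg (· (e2 i)) hy),
    ContinuousLinearEquiv.fderiv_fderiv_conj_apply]
  simp only [LinearIsometryEquiv.coe_symm_toContinuousLinearEquiv,
    LinearIsometryEquiv.coe_toContinuousLinearEquiv]
  rw [fderiv_fderiv_scaleArg_apply hxs, hc, im_repr_symm_e2_div, im_repr_symm_e2_div, ← real_smul,
    map_smul, ← iota_eq_scaleArg Δ hx0, PiLp.smul_apply, hat, norm_iota, smul_eq_mul]
  field_simp
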